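/- arXiv:1212.5117 — 3 statements merged into one kernel-verified Lean document; each statement's English description precedes it below -/
import Mathlib

section
/- Let N ≥ 1, let a ≥ 0 and let (E_x)_{x∈V_N} be nonnegative real numbers. Then for every x, y ∈ V_N and every t ≥ 0, |(exp(tL))(x,y) − 2^{−N}| ≤ e^{−2t}, where exp denotes the matrix exponential. -/
/-!
The generator `L` is symmetric with zero row sums, so its Dirichlet form is
`w ⬝ L w = -½ ∑_{x,y} L(x,y) (w x - w y)²`. All jump rates are at least `1`, so this is dominated
by the Dirichlet form of the simple random walk on the hypercube, which satisfies the Poincaré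
inequality with constant `2` (Walsh–Fourier expansion): `w ⬝ L w ≤ -2 ‖w‖²` whenever `∑ w = 0`.
Along `u t = exp (t L) (e_y - 2^{-N} 𝟙)`, which stays mean zero, `e^{4t} ‖u t‖²` is therefore
nonincreasing, and `exp (t L) x y - 2^{-N}` is the coordinate `u t x`.
-/

open MeasureTheory ProbabilityTheory Filter

/-- `x ∼ y`: the vertices `x, y` of the hypercube `V_N = {0,1}^N` differ in exactly
one coordinate. -/
def nbr {N : ℕ} (x y : Fin N → Bool) : Prop :=
  (Finset.univ.filter fun i => x i ≠ y i).card = 1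

instance {N : ℕ} (x y : Fin N → Bool) : Decidable (nbr x y) :=
  inferInstanceAs (Decidable (_ = 1))

/-- The generator matrix `L` of the walk with jump rates `ω(x,y) = e^{a(E_x+E_y)}`. -/
noncomputable def gen (N : ℕ) (a : ℝ) (E : (Fin N → Bool) → ℝ) :
    Matrix (Fin N → Bool) (Fin N → Bool) ℝ := fun x y =>
  if x = y then -(∑ z, if nbr x z then Real.exp (a * (E x + E z)) else 0)
  else if nbr x y then Real.exp (a * (E x + E y)) else 0

open NormedSpace Matrix

theorem HasDerivAt.dotProduct {𝕜 n : Type*} [NontriviallyNormedField 𝕜] [Fintype n]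
    {f g : 𝕜 → n → 𝕜} {f' g' : n → 𝕜} {t : 𝕜} (hf : HasDerivAt f f' t)
    (hg : HasDerivAt g g' t) :
    HasDerivAt (fun s => f s ⬝ᵥ g s) (f' ⬝ᵥ g t + f t ⬝ᵥ g') t := by
  unfold _root_.dotProduct
  rw [← Finset.sum_add_distrib]
  exact HasDerivAt.fun_sum fun i _ => (hasDerivAt_pi.1 hf i).mul (hasDerivAt_pi.1 hg i)

namespace Matrix

variable {n : Type*} [Fintype n]

theorem dotProduct_mulVec_eq_neg_half_sum {A : Matrix n n ℝ} (hA : A.IsSymm) (hA1 : A *ᵥ 1 = 0)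
    (w : n → ℝ) : w ⬝ᵥ (A *ᵥ w) = -(1 / 2) * ∑ x, ∑ y, A x y * (w x - w y) ^ 2 := by
  have hrow (x : n) : ∑ y, A x y = 0 := by simpa [mulVec, dotProduct] using congrFun hA1 x
  have hcol (y : n) : ∑ x, A x y = 0 := by simpa [hA.apply] using hrow y
  have hx : ∑ x, ∑ y, A x y * w x ^ 2 = 0 := by simp [← Finset.sum_mul, hrow]
  have hy : ∑ x, ∑ y, A x y * w y ^ 2 = 0 := by
    rw [Finset.sum_comm]; simp [← Finset.sum_mul, hcol]
  have hxy : w ⬝ᵥ (A *ᵥ w) = ∑ x, ∑ y, A x y * (w x * w y) := by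
    simp only [dotProduct, mulVec, Finset.mul_sum]
    exact Finset.sum_congr rfl fun x _ => Finset.sum_congr rfl fun y _ => by ring
  calc w ⬝ᵥ (A *ᵥ w)
      = -(1 / 2) * ((∑ x, ∑ y, A x y * w x ^ 2) + (∑ x, ∑ y, A x y * w y ^ 2)
          - 2 * ∑ x, ∑ y, A x y * (w x * w y)) := by rw [hx, hy, hxy]; ring
    _ = -(1 / 2) * ∑ x, ∑ y, A x y * (w x - w y) ^ 2 := by
      simp only [Finset.mul_sum, ← Finset.sum_add_distrib, ← Finset.sum_sub_distrib]
      ring_nf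

variable [DecidableEq n] {𝕂 : Type*} [RCLike 𝕂]

section
-- `exp` does not depend on the norm; a Banach-algebra norm is only needed to differentiate it.
attribute [local instance] Matrix.linftyOpNormedRing Matrix.linftyOpNormedAlgebra

theorem hasDerivAt_exp_smul_mulVec (A : Matrix n n 𝕂) (v : n → 𝕂) (t : 𝕂) :
    HasDerivAt (fun s : 𝕂 => exp (s • A) *ᵥ v) (A *ᵥ (exp (t • A) *ᵥ v)) t := by
  let L : Matrix n n 𝕂 →ₗ[𝕂] n → 𝕂 :=
    { toFun := fun M => M *ᵥ v
      map_add' := fun M N => add_mulVec M N v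
      map_smul' := fun c M => smul_mulVec c M v }
  exact (L.toContinuousLinearMap.hasFDerivAt.comp_hasDerivAt t
    (hasDerivAt_exp_smul_const' A t)).congr_deriv (mulVec_mulVec _ _ _).symm

end

theorem exp_smul_mulVec_eq_self {A : Matrix n n 𝕂} {v : n → 𝕂} (hv : A *ᵥ v = 0) (t : 𝕂) :
    exp (t • A) *ᵥ v = v := by
  have hderiv (s : 𝕂) : HasDerivAt (fun s : 𝕂 => exp (s • A) *ᵥ v) 0 s := by
    refine (hasDerivAt_exp_smul_mulVec A v s).congr_deriv ?_
    rw [mulVec_mulVec, ((Commute.refl A).smul_right s).exp_right.eq, ← mulVec_mulVec, hv,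
      mulVec_zero]
  simpa using is_const_of_deriv_eq_zero (fun s => (hderiv s).differentiableAt)
    (fun s => (hderiv s).deriv) t 0

theorem sum_exp_smul_mulVec {A : Matrix n n 𝕂} (hA : 1 ᵥ* A = 0) (v : n → 𝕂) (t : 𝕂) :
    ∑ i, (exp (t • A) *ᵥ v) i = ∑ i, v i := by
  have hderiv (s : 𝕂) : HasDerivAt (fun s : 𝕂 => ∑ i, (exp (s • A) *ᵥ v) i) 0 s := by
    refine (HasDerivAt.fun_sum fun i _ =>
      hasDerivAt_pi.1 (hasDerivAt_exp_smul_mulVec A v s) i).congr_deriv ?_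
    rw [← one_dotProduct, dotProduct_mulVec, hA, zero_dotProduct]
  simpa using is_const_of_deriv_eq_zero (fun s => (hderiv s).differentiableAt)
    (fun s => (hderiv s).deriv) t 0

theorem exp_smul_mulVec_dotProduct_self_le {A : Matrix n n ℝ} (hA : 1 ᵥ* A = 0) {c : ℝ}
    (hgap : ∀ v : n → ℝ, ∑ i, v i = 0 → v ⬝ᵥ (A *ᵥ v) ≤ -c * (v ⬝ᵥ v))
    {v : n → ℝ} (hv : ∑ i, v i = 0) {t : ℝ} (ht : 0 ≤ t) :
    (exp (t • A) *ᵥ v) ⬝ᵥ (exp (t • A) *ᵥ v) ≤ Real.exp (-2 * c * t) * (v ⬝ᵥ v) := by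
  set w : ℝ → n → ℝ := fun s => exp (s • A) *ᵥ v
  have hderiv (s : ℝ) : HasDerivAt (fun s => Real.exp (2 * c * s) * (w s ⬝ᵥ w s))
      (Real.exp (2 * c * s) * (2 * (c * (w s ⬝ᵥ w s) + w s ⬝ᵥ (A *ᵥ w s)))) s := by
    have hw := hasDerivAt_exp_smul_mulVec A v s
    refine (((hasDerivAt_id s).const_mul (2 * c)).exp.mul (hw.dotProduct hw)).congr_deriv ?_
    rw [dotProduct_comm (A *ᵥ w s)]
    simp only [id, w]
    ring
  have hanti := antitone_of_hasDerivAt_nonpos hderiv fun s => by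
    have hws := hgap (w s) (by simp only [w, sum_exp_smul_mulVec hA, hv])
    rw [Pi.zero_apply]
    nlinarith [Real.exp_pos (2 * c * s)]
  have := hanti ht
  simp only [w, mul_zero, Real.exp_zero, one_mul, zero_smul, exp_zero, one_mulVec] at this
  rw [show -2 * c * t = -(2 * c * t) by ring, Real.exp_neg, ← div_eq_inv_mul,
    le_div_iff₀ (Real.exp_pos _), mul_comm]
  exact this

theorem abs_exp_smul_apply_sub_inv_card_le {A : Matrix n n ℝ} (hA : A.IsSymm) (hA1 : A *ᵥ 1 = 0)
    {c : ℝ} (hgap : ∀ v : n → ℝ, ∑ i, v i = 0 → v ⬝ᵥ (A *ᵥ v) ≤ -c * (v ⬝ᵥ v))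
    {t : ℝ} (ht : 0 ≤ t) (x y : n) :
    |exp (t • A) x y - 1 / Fintype.card n| ≤ Real.exp (-c * t) := by
  have : Nonempty n := ⟨y⟩
  set v : n → ℝ := Pi.single y 1 - (1 / Fintype.card n : ℝ) • 1
  have hv : ∑ i, v i = 0 := by
    have : (Fintype.card n : ℝ) ≠ 0 := Nat.cast_ne_zero.2 Fintype.card_ne_zero
    simp [v, Finset.sum_sub_distrib, this]
  have hvv : v ⬝ᵥ v ≤ 1 := by
    have : v ⬝ᵥ v = 1 - 1 / Fintype.card n := by
      simp only [v, dotProduct_sub, dotProduct_single, dotProduct_smul, dotProduct_one, hv]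
      simp
    rw [this, sub_le_self_iff]
    positivity
  set w := exp (t • A) *ᵥ v
  have hentry : exp (t • A) x y - 1 / Fintype.card n = w x := by
    simp [w, v, mulVec_sub, mulVec_smul, exp_smul_mulVec_eq_self hA1]
  have hwx : w x ^ 2 ≤ Real.exp (-c * t) ^ 2 := calc
    w x ^ 2 ≤ w ⬝ᵥ w := by
      rw [sq]
      exact Finset.single_le_sum (f := fun i => w i * w i) (fun i _ => mul_self_nonneg _)
        (Finset.mem_univ x)
    _ ≤ Real.exp (-2 * c * t) * (v ⬝ᵥ v) :=
      exp_smul_mulVec_dotProduct_self_le (by rw [← mulVec_transpose, hA.eq, hA1]) hgap hv ht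
    _ ≤ Real.exp (-c * t) ^ 2 := by
      rw [← Real.exp_nat_mul]
      exact le_of_le_of_eq (mul_le_of_le_one_right (Real.exp_pos _).le hvv) (by ring_nf)
  rw [hentry]
  exact abs_le_of_sq_le_sq hwx (Real.exp_pos _).le

end Matrix

namespace Hypercube

variable {N : ℕ}

def flipAt (i : Fin N) (x : Fin N → Bool) : Fin N → Bool := Function.update x i (!x i)

theorem flipAt_involutive (i : Fin N) : Function.Involutive (flipAt i) := fun x => by
  ext j; by_cases h : j = i <;> simp [flipAt, Function.update_apply, h]

theorem nbr_iff_exists_flipAt {x y : Fin N → Bool} : nbr x y ↔ ∃ i, y = flipAt i x := by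
  simp only [nbr, Finset.card_eq_one, Finset.ext_iff, funext_iff, flipAt, Function.update_apply]
  refine exists_congr fun i => forall_congr' fun j => ?_
  rcases eq_or_ne j i with rfl | h <;> cases hx : x j <;> cases hy : y j <;> simp [*]

theorem nbr_comm {x y : Fin N → Bool} : nbr x y ↔ nbr y x := by
  simp only [nbr, ne_comm]

theorem not_nbr_self (x : Fin N → Bool) : ¬ nbr x x := by
  simp [nbr]

theorem flipAt_injective (x : Fin N → Bool) : Function.Injective fun i : Fin N => flipAt i x := by
  intro i j h
  by_contra hij
  simpa [flipAt, Function.update_apply, hij] using congrFun h i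

theorem sum_nbr {M : Type*} [AddCommMonoid M] (x : Fin N → Bool) (f : (Fin N → Bool) → M) :
    ∑ y with nbr x y, f y = ∑ i, f (flipAt i x) := by
  have : Finset.univ.filter (nbr x) = Finset.univ.image fun i => flipAt i x := by
    ext y; simp [nbr_iff_exists_flipAt, eq_comm]
  rw [this, Finset.sum_image fun i _ j _ h => flipAt_injective x h]

def walsh (s x : Fin N → Bool) : ℝ := ∏ i, if s i && x i then -1 else 1

def walshCoeff (w : (Fin N → Bool) → ℝ) (s : Fin N → Bool) : ℝ := ∑ x, w x * walsh s x

theorem sum_walsh_mul_walsh (x y : Fin N → Bool) :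
    ∑ s, walsh s x * walsh s y = if x = y then 2 ^ N else 0 := by
  simp only [walsh, ← Finset.prod_mul_distrib]
  rw [← Fintype.prod_sum fun i (b : Bool) =>
    (if b && x i then (-1 : ℝ) else 1) * (if b && y i then -1 else 1)]
  have hfactor (i : Fin N) : ∑ b : Bool, (if b && x i then (-1 : ℝ) else 1) *
      (if b && y i then -1 else 1) = if x i = y i then 2 else 0 := by
    cases x i <;> cases y i <;> norm_num
  simp only [hfactor]
  split_ifs with hxy
  · simp [hxy]
  · obtain ⟨i, hi⟩ := Function.ne_iff.1 hxy
    exact Finset.prod_eq_zero (Finset.mem_univ i) (if_neg hi)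

theorem sum_walshCoeff_sq (w : (Fin N → Bool) → ℝ) :
    ∑ s, walshCoeff w s ^ 2 = 2 ^ N * ∑ x, w x ^ 2 := by
  calc ∑ s, walshCoeff w s ^ 2
      = ∑ s, ∑ x, ∑ y, w x * w y * (walsh s x * walsh s y) := by
        simp only [walshCoeff, sq, Finset.sum_mul_sum]
        exact Finset.sum_congr rfl fun s _ => Finset.sum_congr rfl fun x _ =>
          Finset.sum_congr rfl fun y _ => by ring
    _ = ∑ x, ∑ y, w x * w y * ∑ s, walsh s x * walsh s y := by
        rw [Finset.sum_comm]
        simp only [Finset.mul_sum]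
        exact Finset.sum_congr rfl fun x _ => Finset.sum_comm
    _ = 2 ^ N * ∑ x, w x ^ 2 := by
        simp [sum_walsh_mul_walsh, Finset.mul_sum, sq, mul_comm]

theorem walsh_flipAt (s : Fin N → Bool) (i : Fin N) (x : Fin N → Bool) :
    walsh s (flipAt i x) = (if s i then -1 else 1) * walsh s x := by
  simp only [walsh, ← Finset.mul_prod_erase Finset.univ _ (Finset.mem_univ i), ← mul_assoc]
  congr 1
  · simp only [flipAt, Function.update_self]
    cases s i <;> cases x i <;> norm_num
  · exact Finset.prod_congr rfl fun j hj => by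
      simp [flipAt, Function.update_of_ne (Finset.ne_of_mem_erase hj)]

theorem walshCoeff_sub_flipAt (w : (Fin N → Bool) → ℝ) (i : Fin N) (s : Fin N → Bool) :
    walshCoeff (fun x => w x - w (flipAt i x)) s = if s i then 2 * walshCoeff w s else 0 := by
  have hflip : ∑ x, w (flipAt i x) * walsh s x = ∑ x, w x * walsh s (flipAt i x) :=
    Fintype.sum_equiv ((flipAt_involutive i).toPerm _) _ _
      fun x => by rw [Function.Involutive.coe_toPerm, flipAt_involutive i x]
  simp only [walshCoeff, sub_mul, Finset.sum_sub_distrib, hflip, walsh_flipAt]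
  cases s i <;> simp [Finset.mul_sum, two_mul, Finset.sum_add_distrib]

theorem walshCoeff_const_false (w : (Fin N → Bool) → ℝ) :
    walshCoeff w (fun _ => false) = ∑ x, w x := by
  simp [walshCoeff, walsh]

theorem four_mul_sum_sq_le_sum_sum_sub_flipAt_sq (w : (Fin N → Bool) → ℝ) (hw : ∑ x, w x = 0) :
    4 * ∑ x, w x ^ 2 ≤ ∑ i, ∑ x, (w x - w (flipAt i x)) ^ 2 := by
  have hterm (s : Fin N → Bool) :
      4 * walshCoeff w s ^ 2 ≤ ∑ i, if s i then 4 * walshCoeff w s ^ 2 else 0 := by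
    by_cases hs : ∃ i, s i
    · obtain ⟨i, hi⟩ := hs
      simpa [hi] using Finset.single_le_sum (f := fun i => if s i then 4 * walshCoeff w s ^ 2 else 0)
        (fun j _ => by positivity) (Finset.mem_univ i)
    · obtain rfl : s = fun _ => false := funext fun i => by simpa using not_exists.1 hs i
      simp [walshCoeff_const_false, hw]
  have hspectral : 2 ^ N * ∑ i, ∑ x, (w x - w (flipAt i x)) ^ 2 =
      ∑ s, ∑ i, if s i then 4 * walshCoeff w s ^ 2 else 0 := by
    rw [Finset.mul_sum, Finset.sum_comm]
    refine Finset.sum_congr rfl fun i _ => ?_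
    rw [← sum_walshCoeff_sq]
    refine Finset.sum_congr rfl fun s _ => ?_
    rw [walshCoeff_sub_flipAt]
    split_ifs <;> ring
  have h := Finset.sum_le_sum fun s (_ : s ∈ Finset.univ) => hterm s
  rw [← Finset.mul_sum, sum_walshCoeff_sq, ← hspectral] at h
  nlinarith [pow_pos (two_pos (α := ℝ)) N]

end Hypercube

open Hypercube

theorem gen_isSymm (N : ℕ) (a : ℝ) (E : (Fin N → Bool) → ℝ) : (gen N a E).IsSymm := by
  ext x y
  by_cases h : x = y
  · subst h; rfl
  · simp [gen, h, Ne.symm h, nbr_comm, add_comm]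

theorem gen_mulVec_one (N : ℕ) (a : ℝ) (E : (Fin N → Bool) → ℝ) : gen N a E *ᵥ 1 = 0 := by
  ext x
  have hsplit (y : Fin N → Bool) : gen N a E x y =
      (if x = y then -∑ z, if nbr x z then Real.exp (a * (E x + E z)) else 0 else 0) +
        if nbr x y then Real.exp (a * (E x + E y)) else 0 := by
    unfold gen
    split_ifs <;> simp_all [not_nbr_self]
  simp [mulVec, dotProduct, hsplit, Finset.sum_add_distrib]

theorem gen_dotProduct_mulVec_le {N : ℕ} {a : ℝ} (ha : 0 ≤ a) {E : (Fin N → Bool) → ℝ}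
    (hE : ∀ x, 0 ≤ E x) (w : (Fin N → Bool) → ℝ) (hw : ∑ x, w x = 0) :
    w ⬝ᵥ (gen N a E *ᵥ w) ≤ -2 * (w ⬝ᵥ w) := by
  have hedge (x y : Fin N → Bool) :
      (if nbr x y then (w x - w y) ^ 2 else 0) ≤ gen N a E x y * (w x - w y) ^ 2 := by
    by_cases hxy : x = y
    · subst hxy; simp [not_nbr_self]
    · simp only [gen, if_neg hxy]
      split_ifs
      · exact le_mul_of_one_le_left (sq_nonneg _)
          (Real.one_le_exp (mul_nonneg ha (add_nonneg (hE x) (hE y))))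
      · simp
  have hcut : ∑ i, ∑ x, (w x - w (flipAt i x)) ^ 2 ≤
      ∑ x, ∑ y, gen N a E x y * (w x - w y) ^ 2 := calc
    _ = ∑ x, ∑ y with nbr x y, (w x - w y) ^ 2 := by
      rw [Finset.sum_comm]; simp only [sum_nbr]
    _ = ∑ x, ∑ y, if nbr x y then (w x - w y) ^ 2 else 0 := by simp only [Finset.sum_filter]
    _ ≤ _ := Finset.sum_le_sum fun x _ => Finset.sum_le_sum fun y _ => hedge x y
  have hpoincare := four_mul_sum_sq_le_sum_sum_sub_flipAt_sq w hw
  have hww : w ⬝ᵥ w = ∑ x, w x ^ 2 := by simp [dotProduct, sq]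
  rw [dotProduct_mulVec_eq_neg_half_sum (gen_isSymm N a E) (gen_mulVec_one N a E), hww]
  linarith

theorem stmt2_general (N : ℕ) (a : ℝ) (ha : 0 ≤ a)
    (E : (Fin N → Bool) → ℝ) (hE : ∀ x, 0 ≤ E x)
    (x y : Fin N → Bool) (t : ℝ) (ht : 0 ≤ t) :
    |(NormedSpace.exp (t • gen N a E)) x y - 1 / 2 ^ N| ≤ Real.exp (-2 * t) := by
  have hcard : (Fintype.card (Fin N → Bool) : ℝ) = 2 ^ N := by simp
  have := abs_exp_smul_apply_sub_inv_card_le (gen_isSymm N a E) (gen_mulVec_one N a E)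
    (gen_dotProduct_mulVec_le ha hE) ht x y
  rwa [hcard] at this

/-- Uniform decay of the heat kernel towards the uniform measure. -/
theorem stmt2 (N : ℕ) (hN : 1 ≤ N) (a : ℝ) (ha : 0 ≤ a)
    (E : (Fin N → Bool) → ℝ) (hE : ∀ x, 0 ≤ E x)
    (x y : Fin N → Bool) (t : ℝ) (ht : 0 ≤ t) :
    |(NormedSpace.exp (t • gen N a E)) x y - 1 / 2 ^ N| ≤ Real.exp (-2 * t) :=
  stmt2_general N a ha E hE x y t ht
end

section
/- Fix a constant ā > 0. For each N ≥ 2 let a_N be a real number with 0 ≤ a_N ≤ ā√(2 log N), let (E_x)_{x∈V_N} be i.i.d. random variables with law N_+(0,1) under P, and set ω̄_N = max_{x∈V_N} e^{a_N E_x} Σ_{z∼x} e^{a_N E_z}. Then for all N sufficiently large, P[ log ω̄_N > N^{3/4} ] ≤ e^{−N^{5/4}}. -/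
/-!
If every `E_x` is at most `t = 2 N^{5/8}`, each vertex has at most `N` neighbours, so
`log ω̄_N ≤ log N + 2 a_N t`, which is `o(N^{3/4})` because `a_N = O(√(log N))`. A union bound
over the `2^N` vertices and the Chernoff bound for the Gaussian tail give
`P[max_x E_x > t] ≤ 2^N e^{-t²/2} = 2^N e^{-2 N^{5/4}} ≤ e^{-N^{5/4}}`.
-/

open MeasureTheory ProbabilityTheory Filter

/-- The law `N_+(0,1)` of `max(Z,0)` for `Z` standard Gaussian. -/
noncomputable def halfGaussian : Measure ℝ :=
  (gaussianReal 0 1).map (fun z => max z 0)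

instance : IsProbabilityMeasure halfGaussian :=
  Measure.isProbabilityMeasure_map (by measurability)

/-- The joint law `P` of the i.i.d. family `(E_x)_{x ∈ V_N}` with marginal `N_+(0,1)`. -/
noncomputable def Pmeas (N : ℕ) : Measure ((Fin N → Bool) → ℝ) :=
  Measure.pi fun _ => halfGaussian

/-- The maximal total jump rate `ω̄_N = max_x e^{a_N E_x} ∑_{z ∼ x} e^{a_N E_z}`. -/
noncomputable def omegaBar (N : ℕ) (aN : ℝ) (E : (Fin N → Bool) → ℝ) : ℝ :=
  ⨆ x : Fin N → Bool, Real.exp (aN * E x) * ∑ z, if nbr x z then Real.exp (aN * E z) else 0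

open Real Finset Asymptotics

lemma eq_update_not_of_nbr {N : ℕ} {x z : Fin N → Bool} (h : nbr x z) :
    ∃ i, z = Function.update x i (!x i) := by
  obtain ⟨i, hi⟩ := card_eq_one.mp h
  have hdiff : ∀ j, x j ≠ z j ↔ j = i := fun j => by simpa using Finset.ext_iff.mp hi j
  refine ⟨i, funext fun j => ?_⟩
  by_cases hj : j = i
  · subst hj
    have := (hdiff j).2 rfl
    rw [Function.update_self]
    revert this
    cases x j <;> cases z j <;> simp
  · rw [Function.update_of_ne hj]
    exact (not_not.mp ((hdiff j).not.2 hj)).symm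

lemma card_filter_nbr_le {N : ℕ} (x : Fin N → Bool) : #{z | nbr x z} ≤ N := by
  calc #{z | nbr x z}
      ≤ #(univ.image fun i : Fin N => Function.update x i (!x i)) := by
        refine card_le_card fun z hz => ?_
        obtain ⟨i, rfl⟩ := eq_update_not_of_nbr (mem_filter.mp hz).2
        exact mem_image_of_mem _ (mem_univ i)
    _ ≤ N := card_image_le.trans (by simp)

lemma sum_nbr_le {N : ℕ} (x : Fin N → Bool) {f : (Fin N → Bool) → ℝ} {c : ℝ} (hc : 0 ≤ c)
    (hf : ∀ z, f z ≤ c) : ∑ z, (if nbr x z then f z else 0) ≤ N * c := by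
  calc ∑ z, (if nbr x z then f z else 0)
      ≤ ∑ z, (if nbr x z then c else 0) := sum_le_sum fun z _ => by split_ifs <;> simp [hf]
    _ = #{z | nbr x z} * c := by rw [sum_ite, sum_const_zero, add_zero, sum_const, nsmul_eq_mul]
    _ ≤ N * c := by gcongr; exact_mod_cast card_filter_nbr_le x

lemma omegaBar_nonneg (N : ℕ) (aN : ℝ) (E : (Fin N → Bool) → ℝ) : 0 ≤ omegaBar N aN E :=
  Real.iSup_nonneg fun _ => mul_nonneg (exp_nonneg _) <|
    sum_nonneg fun _ _ => by split_ifs <;> positivity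

lemma omegaBar_le {N : ℕ} {aN t : ℝ} (haN : 0 ≤ aN) {E : (Fin N → Bool) → ℝ}
    (hE : ∀ x, E x ≤ t) : omegaBar N aN E ≤ N * exp (2 * aN * t) := by
  have hexp : ∀ x, exp (aN * E x) ≤ exp (aN * t) := fun x => by gcongr; exact hE x
  refine ciSup_le fun x => ?_
  calc exp (aN * E x) * ∑ z, (if nbr x z then exp (aN * E z) else 0)
      ≤ exp (aN * t) * (N * exp (aN * t)) :=
        mul_le_mul (hexp x) (sum_nbr_le x (exp_nonneg _) hexp)
          (sum_nonneg fun _ _ => by split_ifs <;> positivity) (exp_nonneg _)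
    _ = N * exp (2 * aN * t) := by rw [two_mul, add_mul, exp_add]; ring

lemma log_omegaBar_le {N : ℕ} {aN t : ℝ} (haN : 0 ≤ aN) (ht : 0 ≤ t) {E : (Fin N → Bool) → ℝ}
    (hE : ∀ x, E x ≤ t) : log (omegaBar N aN E) ≤ log N + 2 * aN * t := by
  rcases (omegaBar_nonneg N aN E).eq_or_lt with h0 | hpos
  · rw [← h0, log_zero]
    have := log_natCast_nonneg N
    positivity
  · have hbound := omegaBar_le haN hE
    have hN : (N : ℝ) ≠ 0 := by rintro hN; rw [hN, zero_mul] at hbound; linarith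
    calc log (omegaBar N aN E) ≤ log (N * exp (2 * aN * t)) := log_le_log hpos hbound
      _ = log N + 2 * aN * t := by rw [log_mul hN (exp_pos _).ne', log_exp]

lemma gaussianReal_real_Ici_le {v : NNReal} (hv : v ≠ 0) {t : ℝ} (ht : 0 ≤ t) :
    (gaussianReal 0 v).real (Set.Ici t) ≤ exp (-t ^ 2 / (2 * v)) := by
  have hv' : (0 : ℝ) < v := by positivity
  have chernoff := measure_ge_le_exp_cgf (X := id) (t := t / v) t (by positivity)
    (integrable_exp_mul_gaussianReal (μ := 0) (v := v) (t / v))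
  rw [cgf_gaussianReal (X := id) (μ := 0) (v := v) (by simp)] at chernoff
  convert chernoff using 2
  · rfl
  · field_simp
    ring

lemma halfGaussian_Ioi_le {t : ℝ} (ht : 0 ≤ t) :
    halfGaussian (Set.Ioi t) ≤ ENNReal.ofReal (exp (-t ^ 2 / 2)) := by
  have hpre : (fun z : ℝ => max z 0) ⁻¹' Set.Ioi t = Set.Ioi t := by
    ext z
    simp only [Set.mem_preimage, Set.mem_Ioi, lt_max_iff, or_iff_left_iff_imp]
    exact fun h => absurd h (not_lt.2 ht)
  rw [halfGaussian, Measure.map_apply (by fun_prop) measurableSet_Ioi, hpre]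
  calc gaussianReal 0 1 (Set.Ioi t) ≤ gaussianReal 0 1 (Set.Ici t) :=
        measure_mono Set.Ioi_subset_Ici_self
    _ = ENNReal.ofReal ((gaussianReal 0 1).real (Set.Ici t)) := (ofReal_measureReal).symm
    _ ≤ ENNReal.ofReal (exp (-t ^ 2 / 2)) := by
        gcongr
        simpa using gaussianReal_real_Ici_le one_ne_zero ht

lemma measure_pi_exists_mem_le {ι α : Type*} [Fintype ι] [MeasurableSpace α] (μ : Measure α)
    [IsProbabilityMeasure μ] {s : Set α} (hs : MeasurableSet s) :
    Measure.pi (fun _ : ι => μ) {f | ∃ i, f i ∈ s} ≤ Fintype.card ι * μ s := by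
  have hunion : {f : ι → α | ∃ i, f i ∈ s} = ⋃ i, Function.eval i ⁻¹' s := by ext; simp
  calc Measure.pi (fun _ : ι => μ) {f | ∃ i, f i ∈ s}
      ≤ ∑ i, Measure.pi (fun _ : ι => μ) (Function.eval i ⁻¹' s) :=
        hunion ▸ measure_iUnion_fintype_le _ _
    _ = ∑ _i : ι, μ s := by
        congr! with i
        exact (measurePreserving_eval _ i).measure_preimage hs.nullMeasurableSet
    _ = Fintype.card ι * μ s := by rw [sum_const, nsmul_eq_mul, card_univ]

lemma isLittleO_sqrt_log_mul_rpow {r s : ℝ} (hrs : r < s) :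
    (fun x => √(log x) * x ^ r) =o[atTop] fun x => x ^ s := by
  have hlog := (isLittleO_log_rpow_rpow_atTop (1 / 2) (sub_pos.2 hrs)).mul_isBigO
    (isBigO_refl (fun x : ℝ => x ^ r) atTop)
  refine (hlog.congr' ?_ ?_)
  · exact Eventually.of_forall fun x => by dsimp only; rw [sqrt_eq_rpow]
  · filter_upwards [eventually_gt_atTop 0] with x hx
    rw [← rpow_add hx, sub_add_cancel]

lemma eventually_log_add_mul_sqrt_log_le (C : ℝ) :
    ∀ᶠ x : ℝ in atTop, log x + C * √(2 * log x) * x ^ (5 / 8 : ℝ) ≤ x ^ (3 / 4 : ℝ) := by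
  have hsmall := ((isLittleO_log_rpow_atTop (by norm_num : (0 : ℝ) < 3 / 4)).add
    ((isLittleO_sqrt_log_mul_rpow (by norm_num : (5 / 8 : ℝ) < 3 / 4)).const_mul_left
      (C * √2))).bound one_pos
  filter_upwards [hsmall, eventually_ge_atTop 0] with x hx hx0
  rw [norm_of_nonneg (rpow_nonneg hx0 _), one_mul] at hx
  rw [sqrt_mul zero_le_two]
  linarith [le_norm_self (log x + C * √2 * (√(log x) * x ^ (5 / 8 : ℝ)))]

lemma two_pow_mul_exp_le (N : ℕ) :
    (2 : ENNReal) ^ N * ENNReal.ofReal (exp (-(2 * (N : ℝ) ^ (5 / 8 : ℝ)) ^ 2 / 2)) ≤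
      ENNReal.ofReal (exp (-(N : ℝ) ^ (5 / 4 : ℝ))) := by
  have hsq : (2 * (N : ℝ) ^ (5 / 8 : ℝ)) ^ 2 / 2 = 2 * (N : ℝ) ^ (5 / 4 : ℝ) := by
    rw [mul_pow, ← rpow_mul_natCast N.cast_nonneg]
    norm_num
    ring
  have hN : (N : ℝ) ≤ (N : ℝ) ^ (5 / 4 : ℝ) := by
    rcases N.eq_zero_or_pos with rfl | hN
    · simp
    · exact self_le_rpow_of_one_le (by exact_mod_cast hN) (by norm_num)
  have h2N : (2 : ℝ) ^ N ≤ exp ((N : ℝ) ^ (5 / 4 : ℝ)) :=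
    calc (2 : ℝ) ^ N ≤ exp 1 ^ N := by gcongr; linarith [add_one_le_exp (1 : ℝ)]
      _ = exp N := by rw [← exp_nat_mul, mul_one]
      _ ≤ exp ((N : ℝ) ^ (5 / 4 : ℝ)) := exp_le_exp.2 hN
  rw [neg_div, hsq, ← ENNReal.ofReal_ofNat, ← ENNReal.ofReal_pow zero_le_two,
    ← ENNReal.ofReal_mul (by positivity)]
  gcongr
  calc (2 : ℝ) ^ N * exp (-(2 * (N : ℝ) ^ (5 / 4 : ℝ)))
      ≤ exp ((N : ℝ) ^ (5 / 4 : ℝ)) * exp (-(2 * (N : ℝ) ^ (5 / 4 : ℝ))) := by gcongr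
    _ = exp (-(N : ℝ) ^ (5 / 4 : ℝ)) := by rw [← exp_add]; ring_nf

theorem stmt8_general (abar : ℝ) (a : ℕ → ℝ)
    (ha : ∀ N, 2 ≤ N → 0 ≤ a N ∧ a N ≤ abar * Real.sqrt (2 * Real.log N)) :
    ∀ᶠ N : ℕ in atTop,
      Pmeas N {E | (N : ℝ) ^ ((3 : ℝ) / 4) < Real.log (omegaBar N (a N) E)} ≤
        ENNReal.ofReal (Real.exp (-(N : ℝ) ^ ((5 : ℝ) / 4))) := by
  filter_upwards [tendsto_natCast_atTop_atTop.eventually (eventually_log_add_mul_sqrt_log_le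
    (4 * abar)), eventually_ge_atTop 2] with N hlog hN
  obtain ⟨ha0, ha1⟩ := ha N hN
  set t : ℝ := 2 * (N : ℝ) ^ (5 / 8 : ℝ)
  have ht : 0 ≤ t := by positivity
  have hsub : {E | (N : ℝ) ^ ((3 : ℝ) / 4) < log (omegaBar N (a N) E)} ⊆
      {E | ∃ x, E x ∈ Set.Ioi t} := by
    intro E hE
    simp only [Set.mem_ofPred_eq, Set.mem_Ioi] at hE ⊢
    by_contra! hbounded
    have hat : 2 * a N * t ≤ 4 * abar * √(2 * log N) * (N : ℝ) ^ (5 / 8 : ℝ) := by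
      have := mul_le_mul_of_nonneg_right ha1 ht
      linarith
    have := log_omegaBar_le ha0 ht hbounded
    linarith
  calc Pmeas N _ ≤ Pmeas N {E | ∃ x, E x ∈ Set.Ioi t} := measure_mono hsub
    _ ≤ Fintype.card (Fin N → Bool) * halfGaussian (Set.Ioi t) :=
        measure_pi_exists_mem_le _ measurableSet_Ioi
    _ ≤ 2 ^ N * ENNReal.ofReal (exp (-t ^ 2 / 2)) := by
        simp only [Fintype.card_fun, Fintype.card_bool, Fintype.card_fin, Nat.cast_pow,
          Nat.cast_ofNat]
        gcongr
        exact halfGaussian_Ioi_le ht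
    _ ≤ _ := by simpa using two_pow_mul_exp_le N

/-- A super-exponential bound on the probability that `log ω̄_N` exceeds `N^{3/4}`. -/
theorem stmt8 (abar : ℝ) (habar : 0 < abar) (a : ℕ → ℝ)
    (ha : ∀ N, 2 ≤ N → 0 ≤ a N ∧ a N ≤ abar * Real.sqrt (2 * Real.log N)) :
    ∀ᶠ N : ℕ in atTop,
      Pmeas N {E | (N : ℝ) ^ ((3 : ℝ) / 4) < Real.log (omegaBar N (a N) E)} ≤
        ENNReal.ofReal (Real.exp (-(N : ℝ) ^ ((5 : ℝ) / 4))) :=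
  stmt8_general abar a ha
end

section
/- Fix β > 0 and c̄ ∈ (0, log 2), and let (d_N) be a sequence of reals with d_N ≥ 3 and log d_N ~ c̄ N as N → ∞. Define b_N = (2 log d_N)^{1/2} − (log log d_N + log(4π)) / (2 (2 log d_N)^{1/2}), B_N = e^{β √N b_N}, and α = √(2c̄)/β, and assume α < 1. Let E have law N_+(0,1). Then there exist constants C > 0 and δ₀ ∈ (0,1] such that for every δ ∈ (0, δ₀], limsup_{N→∞} (d_N / B_N) · E[ e^{β √N E} · 1{ e^{β √N E} ≤ δ B_N } ] ≤ C δ^{1−α}. -/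
/-!
With `u = β√N`, the event `{e^{uE} ≤ δ B_N}` is `{E ≤ t}` for `t = b_N + log δ / u ≤ b_N < u`.
On `[0, t]` the Gaussian weight `e^{uz - z²/2}` is dominated by `(u - z)/(u - t)` times itself, an
exact derivative, so the truncated moment is at most `1 + e^{ut - t²/2} / (√(2π) (u - t))`, and
`ut - t²/2 ≤ ub_N - b_N²/2 + (1 - b_N/u) log δ`. The centring `b_N` is chosen so that
`d_N e^{-b_N²/2} ≤ √(2π) √(2 log d_N)`; hence `(d_N/B_N)·E[...]` is at most
`d_N/B_N + δ^{1 - b_N/u} √(2 log d_N) / (u - b_N)`. Since `b_N/√N → √(2c̄)` and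
`c̄ < β√(2c̄)`, this tends to `δ^{1-α} √(2c̄) / (β - √(2c̄))`.
-/

open MeasureTheory ProbabilityTheory Filter

/-- The centering sequence `b_N` built from the scale `d_N`. -/
noncomputable def bseq (d : ℕ → ℝ) (N : ℕ) : ℝ :=
  Real.sqrt (2 * Real.log (d N)) -
    (Real.log (Real.log (d N)) + Real.log (4 * Real.pi)) /
      (2 * Real.sqrt (2 * Real.log (d N)))

/-- The depth scale `B_N = e^{β √N b_N}`. -/
noncomputable def Bseq (β : ℝ) (d : ℕ → ℝ) (N : ℕ) : ℝ :=
  Real.exp (β * Real.sqrt N * bseq d N)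

open Real
open scoped Topology NNReal

lemma integral_exp_mul_sub_sq_div_two_le {u t : ℝ} (ht : 0 ≤ t) (htu : t < u) :
    ∫ z in (0 : ℝ)..t, exp (u * z - z ^ 2 / 2) ≤ exp (u * t - t ^ 2 / 2) / (u - t) := by
  have hut : 0 < u - t := sub_pos.2 htu
  have hderiv : ∀ z, HasDerivAt (fun z => exp (u * z - z ^ 2 / 2))
      ((u - z) * exp (u * z - z ^ 2 / 2)) z :=
    fun z => (((hasDerivAt_id' z).const_mul u).fun_sub ((hasDerivAt_pow 2 z).div_const 2)).exp
      |>.congr_deriv (by norm_num; ring)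
  have hftc : ∫ z in (0 : ℝ)..t, (u - z) * exp (u * z - z ^ 2 / 2) =
      exp (u * t - t ^ 2 / 2) - 1 := by
    rw [intervalIntegral.integral_eq_sub_of_hasDerivAt (fun z _ => hderiv z)
      (by apply Continuous.intervalIntegrable; fun_prop)]
    simp
  calc ∫ z in (0 : ℝ)..t, exp (u * z - z ^ 2 / 2)
      ≤ ∫ z in (0 : ℝ)..t, (u - z) * exp (u * z - z ^ 2 / 2) / (u - t) := by
        refine intervalIntegral.integral_mono_on ht (by apply Continuous.intervalIntegrable; fun_prop)
          (by apply Continuous.intervalIntegrable; fun_prop) fun z hz => ?_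
        rw [le_div_iff₀ hut, mul_comm]
        exact mul_le_mul_of_nonneg_right (by linarith [hz.2]) (exp_pos _).le
    _ = (exp (u * t - t ^ 2 / 2) - 1) / (u - t) := by rw [intervalIntegral.integral_div, hftc]
    _ ≤ exp (u * t - t ^ 2 / 2) / (u - t) := by gcongr; linarith

lemma setIntegral_gaussianReal_eq {μ : ℝ} {v : ℝ≥0} (hv : v ≠ 0) {s : Set ℝ}
    (hs : MeasurableSet s) (f : ℝ → ℝ) :
    ∫ x in s, f x ∂gaussianReal μ v = ∫ x in s, gaussianPDFReal μ v x * f x := by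
  rw [← integral_indicator hs, integral_gaussianReal_eq_integral_smul hv, ← integral_indicator hs]
  congr with x
  by_cases hx : x ∈ s <;> simp [hx]

lemma setIntegral_Iic_exp_mul_halfGaussian_le {u t : ℝ} (htu : t < u) :
    ∫ e in Set.Iic t, exp (u * e) ∂halfGaussian ≤
      1 + exp (u * t - t ^ 2 / 2) / (√(2 * π) * (u - t)) := by
  have hut : 0 < u - t := sub_pos.2 htu
  have hbound : 0 ≤ exp (u * t - t ^ 2 / 2) / (√(2 * π) * (u - t)) := by positivity
  rw [halfGaussian, setIntegral_map measurableSet_Iic (by fun_prop) (by fun_prop)]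
  rcases lt_or_ge t 0 with ht | ht
  · have hempty : (fun z : ℝ => max z 0) ⁻¹' Set.Iic t = ∅ :=
      Set.eq_empty_of_forall_notMem fun z hz => (lt_of_lt_of_le ht (le_max_right z 0)).not_ge hz
    rw [hempty, Measure.restrict_empty, integral_zero_measure]
    linarith
  have hsplit : (fun z : ℝ => max z 0) ⁻¹' Set.Iic t = Set.Iic 0 ∪ Set.Ioc 0 t := by
    rw [Set.Iic_union_Ioc_eq_Iic ht]
    ext z
    simp [ht]
  have hneg : ∀ z ∈ Set.Iic (0 : ℝ), exp (u * max z 0) = 1 := fun z hz => by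
    rw [max_eq_right hz, mul_zero, exp_zero]
  have hpos : ∀ z ∈ Set.Ioc (0 : ℝ) t, exp (u * max z 0) = exp (u * z) := fun z hz => by
    rw [max_eq_left hz.1.le]
  have hintNeg : IntegrableOn (fun z => exp (u * max z 0)) (Set.Iic 0) (gaussianReal 0 1) :=
    (integrableOn_const (by simp)).congr_fun (fun z hz => (hneg z hz).symm) measurableSet_Iic
  have hintPos : IntegrableOn (fun z => exp (u * max z 0)) (Set.Ioc 0 t) (gaussianReal 0 1) :=
    Continuous.integrableOn_Ioc (by fun_prop)
  rw [hsplit, setIntegral_union (Set.Iic_disjoint_Ioc le_rfl) measurableSet_Ioc hintNeg hintPos,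
    setIntegral_congr_fun measurableSet_Iic hneg, setIntegral_congr_fun measurableSet_Ioc hpos,
    setIntegral_gaussianReal_eq one_ne_zero measurableSet_Ioc]
  gcongr
  · simp [measureReal_le_one]
  · have hdensity : ∀ z, gaussianPDFReal 0 1 z * exp (u * z) =
        (√(2 * π))⁻¹ * exp (u * z - z ^ 2 / 2) := fun z => by
      simp only [gaussianPDFReal, NNReal.coe_one, mul_one, sub_zero, mul_assoc, ← exp_add]
      ring_nf
    simp_rw [hdensity]
    rw [integral_const_mul, ← intervalIntegral.integral_of_le ht, mul_comm (√(2 * π)),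
      ← div_div, div_eq_inv_mul _ (√(2 * π))]
    gcongr
    exact integral_exp_mul_sub_sq_div_two_le ht htu

lemma setIntegral_exp_le_mul_exp_halfGaussian_le {u b δ : ℝ} (hu : 0 < u) (hbu : b < u)
    (hδ0 : 0 < δ) (hδ1 : δ ≤ 1) :
    ∫ e in {e | exp (u * e) ≤ δ * exp (u * b)}, exp (u * e) ∂halfGaussian ≤
      1 + δ ^ (1 - b / u) * exp (u * b - b ^ 2 / 2) / (√(2 * π) * (u - b)) := by
  set s := log δ / u
  have hlogδ : log δ = u * s := by rw [mul_div_cancel₀ _ hu.ne']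
  have hs : s ≤ 0 := div_nonpos_of_nonpos_of_nonneg (log_nonpos hδ0.le hδ1) hu.le
  have hset : {e | exp (u * e) ≤ δ * exp (u * b)} = Set.Iic (b + s) := by
    ext e
    rw [Set.mem_ofPred_eq, Set.mem_Iic, ← exp_log hδ0, ← exp_add, exp_le_exp, hlogδ,
      ← mul_add, mul_le_mul_iff_right₀ hu, add_comm s]
  have hexp : exp (u * (b + s) - (b + s) ^ 2 / 2) ≤ δ ^ (1 - b / u) * exp (u * b - b ^ 2 / 2) := by
    have hexponent : log δ * (1 - b / u) = u * s - b * s := by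
      rw [hlogδ]; field_simp
    rw [rpow_def_of_pos hδ0, ← exp_add, exp_le_exp, hexponent]
    nlinarith [sq_nonneg s]
  rw [hset]
  calc _ ≤ 1 + exp (u * (b + s) - (b + s) ^ 2 / 2) / (√(2 * π) * (u - (b + s))) :=
        setIntegral_Iic_exp_mul_halfGaussian_le (by linarith)
    _ ≤ _ := by
        have : 0 < u - b := sub_pos.2 hbu
        gcongr
        linarith

lemma mul_exp_neg_sq_bseq_div_two_le {d : ℕ → ℝ} {N : ℕ} (hd : 1 < d N) :
    d N * exp (-bseq d N ^ 2 / 2) ≤ √(2 * π) * √(2 * log (d N)) := by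
  set L := log (d N)
  have hL : 0 < L := log_pos hd
  -- `b_N = a - ρ` with `a = √(2L)` and `2 a ρ = log L + log (4π)`, so `b_N² ≥ a² - 2 a ρ`
  have hsq : 2 * L - (log L + log (4 * π)) ≤ bseq d N ^ 2 := by
    have ha : 0 < √(2 * L) := by positivity
    have hρ : (log L + log (4 * π)) / (2 * √(2 * L)) * (2 * √(2 * L)) = log L + log (4 * π) :=
      div_mul_cancel₀ _ (by positivity)
    rw [show bseq d N = √(2 * L) - (log L + log (4 * π)) / (2 * √(2 * L)) from rfl]
    nlinarith [sq_sqrt (by positivity : (0 : ℝ) ≤ 2 * L),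
      sq_nonneg ((log L + log (4 * π)) / (2 * √(2 * L)))]
  have hexp : exp (-bseq d N ^ 2 / 2) ≤ exp (-L) * √(4 * π * L) := by
    rw [← exp_log (by positivity : 0 < √(4 * π * L)), ← exp_add, exp_le_exp,
      log_sqrt (by positivity), log_mul (by positivity) hL.ne']
    linarith
  calc d N * exp (-bseq d N ^ 2 / 2) ≤ d N * (exp (-L) * √(4 * π * L)) := by
        gcongr
    _ = √(4 * π * L) := by
        rw [exp_neg, exp_log (by linarith), ← mul_assoc, mul_inv_cancel₀ (by linarith), one_mul]
    _ = √(2 * π) * √(2 * L) := by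
        rw [← sqrt_mul (by positivity)]; ring_nf

lemma abs_sqrt_two_mul_log_sub_bseq_le {d : ℕ → ℝ} {N : ℕ} (hd : 1 ≤ log (d N)) :
    |√(2 * log (d N)) - bseq d N| ≤ 5 / 2 := by
  set L := log (d N)
  have hsL : 1 ≤ √L := one_le_sqrt.mpr hd
  have hlogL : log L ≤ 2 * √L := by
    have := log_le_sub_one_of_pos (by linarith : 0 < √L)
    rw [log_sqrt (by linarith)] at this
    linarith
  have hlog4π : log (4 * π) ≤ 3 := by
    have h16 : log (4 * π) ≤ log (2 ^ 4) := log_le_log (by positivity) (by nlinarith [pi_le_four])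
    rw [log_pow, Nat.cast_ofNat] at h16
    nlinarith [log_two_lt_d9]
  have hnum : 0 ≤ log L + log (4 * π) :=
    add_nonneg (log_nonneg (by linarith)) (log_nonneg (by nlinarith [pi_gt_three]))
  have hden : 2 * √L ≤ 2 * √(2 * L) := by gcongr; linarith
  rw [bseq, sub_sub_cancel, abs_of_nonneg (by positivity), div_le_iff₀ (by positivity)]
  nlinarith

section ScaleSequence

variable {d : ℕ → ℝ} {c : ℝ}

lemma tendsto_bseq_div_sqrt (hL : Tendsto (fun N : ℕ => log (d N) / N) atTop (𝓝 c))
    (hL1 : ∀ᶠ N in atTop, 1 ≤ log (d N)) :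
    Tendsto (fun N : ℕ => bseq d N / √N) atTop (𝓝 √(2 * c)) := by
  have hmain : Tendsto (fun N : ℕ => √(2 * log (d N)) / √N) atTop (𝓝 √(2 * c)) := by
    refine (hL.const_mul 2).sqrt.congr fun N => ?_
    rw [← sqrt_div' _ (Nat.cast_nonneg N), mul_div_assoc]
  have hcorr : Tendsto (fun N : ℕ => (√(2 * log (d N)) - bseq d N) / √N) atTop (𝓝 0) := by
    refine squeeze_zero_norm' ?_ ((tendsto_const_nhds (x := (5 / 2 : ℝ))).div_atTop
      (tendsto_sqrt_atTop.comp tendsto_natCast_atTop_atTop))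
    filter_upwards [hL1] with N hN
    rw [norm_div, Real.norm_eq_abs, Real.norm_of_nonneg (sqrt_nonneg _)]
    exact div_le_div_of_nonneg_right (abs_sqrt_two_mul_log_sub_bseq_le hN) (sqrt_nonneg _)
  have hdiff := hmain.sub hcorr
  rw [sub_zero] at hdiff
  exact hdiff.congr fun N => by ring

lemma tendsto_div_Bseq_zero {β : ℝ} (hc : 0 < c) (hβ : √(2 * c) < β)
    (hL : Tendsto (fun N : ℕ => log (d N) / N) atTop (𝓝 c))
    (hb : Tendsto (fun N : ℕ => bseq d N / √N) atTop (𝓝 √(2 * c)))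
    (hd : ∀ᶠ N in atTop, 0 < d N) :
    Tendsto (fun N => d N / Bseq β d N) atTop (𝓝 0) := by
  -- `log (d_N / B_N) = N (log d_N / N - β b_N / √N)`, and the bracket tends to `c - β √(2c) < 0`
  have hneg : c - β * √(2 * c) < 0 := by
    nlinarith [sq_sqrt (by positivity : 0 ≤ 2 * c), sqrt_pos.2 (by positivity : 0 < 2 * c)]
  have hlog : Tendsto (fun N : ℕ => (log (d N) / N - β * (bseq d N / √N)) * N) atTop atBot :=
    (hL.sub (hb.const_mul β)).neg_mul_atTop hneg tendsto_natCast_atTop_atTop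
  refine (tendsto_exp_atBot.comp hlog).congr' ?_
  filter_upwards [hd, eventually_ne_atTop 0] with N hdN hN
  have hprod : β * (bseq d N / √N) * N = β * √N * bseq d N := by
    rw [mul_assoc, div_mul_eq_mul_div, mul_div_assoc, div_sqrt]
    ring
  rw [Function.comp_apply, sub_mul, div_mul_cancel₀ _ (Nat.cast_ne_zero.2 hN), hprod, exp_sub,
    exp_log hdN, Bseq]

lemma tendsto_sqrt_two_mul_log_div_sub_bseq {β : ℝ} (hβ : √(2 * c) < β)
    (hL : Tendsto (fun N : ℕ => log (d N) / N) atTop (𝓝 c))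
    (hb : Tendsto (fun N : ℕ => bseq d N / √N) atTop (𝓝 √(2 * c))) :
    Tendsto (fun N : ℕ => √(2 * log (d N)) / (β * √N - bseq d N)) atTop
      (𝓝 (√(2 * c) / (β - √(2 * c)))) := by
  refine ((hL.const_mul 2).sqrt.div (tendsto_const_nhds.sub hb) (sub_ne_zero.2 hβ.ne')).congr' ?_
  filter_upwards [eventually_gt_atTop 0] with N hN
  have hsN : 0 < √(N : ℝ) := sqrt_pos.2 (Nat.cast_pos.2 hN)
  show √(2 * (log (d N) / N)) / (β - bseq d N / √N) = _
  rw [← mul_div_assoc, sqrt_div' _ (Nat.cast_nonneg N)]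
  field_simp

lemma div_Bseq_mul_setIntegral_le {β δ : ℝ} {N : ℕ} (hu : 0 < β * √N) (hd : 1 < d N)
    (hb : bseq d N < β * √N) (hδ0 : 0 < δ) (hδ1 : δ ≤ 1) :
    d N / Bseq β d N *
        ∫ e in {e : ℝ | exp (β * √N * e) ≤ δ * Bseq β d N}, exp (β * √N * e) ∂halfGaussian ≤
      d N / Bseq β d N +
        δ ^ (1 - bseq d N / (β * √N)) * (√(2 * log (d N)) / (β * √N - bseq d N)) := by
  set u := β * √N
  set b := bseq d N
  have hB : Bseq β d N = exp (u * b) := rfl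
  have hub : 0 < u - b := sub_pos.2 hb
  rw [hB]
  calc _ ≤ d N / exp (u * b) *
        (1 + δ ^ (1 - b / u) * exp (u * b - b ^ 2 / 2) / (√(2 * π) * (u - b))) := by
        refine mul_le_mul_of_nonneg_left ?_ (div_nonneg (by linarith) (exp_pos _).le)
        exact setIntegral_exp_le_mul_exp_halfGaussian_le hu hb hδ0 hδ1
    _ = d N / exp (u * b) +
        δ ^ (1 - b / u) * (d N * exp (-b ^ 2 / 2)) / (√(2 * π) * (u - b)) := by
        rw [show u * b - b ^ 2 / 2 = u * b + -b ^ 2 / 2 by ring, exp_add]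
        field_simp
    _ ≤ d N / exp (u * b) +
        δ ^ (1 - b / u) * (√(2 * π) * √(2 * log (d N))) / (√(2 * π) * (u - b)) := by
        gcongr _ + _ * ?_ / _
        exact mul_exp_neg_sq_bseq_div_two_le hd
    _ = _ := by
        field_simp

end ScaleSequence

theorem stmt12_general (β cbar : ℝ) (hβ : 0 < β) (hc1 : 0 < cbar)
    (d : ℕ → ℝ) (hd3 : ∀ N, 3 ≤ d N)
    (hd : Tendsto (fun N => Real.log (d N) / (cbar * N)) atTop (nhds 1))
    (hα : Real.sqrt (2 * cbar) / β < 1) :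
    ∃ C > (0 : ℝ), ∃ δ₀ ∈ Set.Ioc (0 : ℝ) 1, ∀ δ ∈ Set.Ioc (0 : ℝ) δ₀,
      limsup
        (fun N => d N / Bseq β d N *
          ∫ e in {e : ℝ | Real.exp (β * Real.sqrt N * e) ≤ δ * Bseq β d N},
            Real.exp (β * Real.sqrt N * e) ∂halfGaussian)
        atTop ≤ C * δ ^ (1 - Real.sqrt (2 * cbar) / β) := by
  have hβc : √(2 * cbar) < β := (div_lt_one hβ).1 hα
  have hL : Tendsto (fun N : ℕ => log (d N) / N) atTop (𝓝 cbar) := by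
    refine (mul_one cbar ▸ hd.const_mul cbar).congr fun N => ?_
    rw [← mul_div_assoc, mul_div_mul_left _ _ hc1.ne']
  have hlog : ∀ N, 1 ≤ log (d N) := fun N =>
    (lt_log_iff_exp_lt (by linarith [hd3 N])).2 (exp_one_lt_d9.trans_le (by linarith [hd3 N])) |>.le
  have hb := tendsto_bseq_div_sqrt hL (Eventually.of_forall hlog)
  refine ⟨√(2 * cbar) / (β - √(2 * cbar)), div_pos (sqrt_pos.2 (by positivity)) (sub_pos.2 hβc),
    1, ⟨one_pos, le_rfl⟩, fun δ ⟨hδ0, hδ1⟩ => ?_⟩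
  have hexponent : Tendsto (fun N : ℕ => 1 - bseq d N / (β * √N)) atTop
      (𝓝 (1 - √(2 * cbar) / β)) :=
    tendsto_const_nhds.sub ((hb.div_const β).congr fun N => by rw [div_div, mul_comm])
  have hbound := (tendsto_div_Bseq_zero hc1 hβc hL hb (.of_forall fun N => by linarith [hd3 N])).add
    ((((continuous_const_rpow hδ0.ne').tendsto _).comp hexponent).mul
      (tendsto_sqrt_two_mul_log_div_sub_bseq hβc hL hb))
  rw [zero_add, mul_comm] at hbound
  refine (limsup_le_limsup ?_ ?_ hbound.isBoundedUnder_le).trans hbound.limsup_eq.le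
  · filter_upwards [eventually_gt_atTop 0, hb.eventually (gt_mem_nhds hβc)] with N hN hbN
    have hsN : 0 < √(N : ℝ) := sqrt_pos.2 (Nat.cast_pos.2 hN)
    exact div_Bseq_mul_setIntegral_le (by positivity) (by linarith [hd3 N])
      ((div_lt_iff₀ hsN).1 hbN) hδ0 hδ1
  · exact isCoboundedUnder_le_of_le atTop fun N =>
      mul_nonneg (div_nonneg (by linarith [hd3 N]) (exp_pos _).le)
        (integral_nonneg fun e => (exp_pos _).le)

/-- The truncated first moment of the Gibbs weight is `O(δ^{1-α})` on the scale `B_N/d_N`. -/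
theorem stmt12 (β cbar : ℝ) (hβ : 0 < β) (hc1 : 0 < cbar) (hc2 : cbar < Real.log 2)
    (d : ℕ → ℝ) (hd3 : ∀ N, 3 ≤ d N)
    (hd : Tendsto (fun N => Real.log (d N) / (cbar * N)) atTop (nhds 1))
    (hα : Real.sqrt (2 * cbar) / β < 1) :
    ∃ C > (0 : ℝ), ∃ δ₀ ∈ Set.Ioc (0 : ℝ) 1, ∀ δ ∈ Set.Ioc (0 : ℝ) δ₀,
      limsup
        (fun N => d N / Bseq β d N *
          ∫ e in {e : ℝ | Real.exp (β * Real.sqrt N * e) ≤ δ * Bseq β d N},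
            Real.exp (β * Real.sqrt N * e) ∂halfGaussian)
        atTop ≤ C * δ ^ (1 - Real.sqrt (2 * cbar) / β) :=
  stmt12_general β cbar hβ hc1 d hd3 hd hα
end
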